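/- There exists an absolute constant C₂ > 0 such that for every ω ∈ (L¹ ∩ L²)(ℝ²₊) with ‖x₂ω‖₁ < ∞, |∫_{ℝ²₊}∫_{ℝ²₊} G(x,y)ω(x)ω(y) dx dy| ≤ C₂·‖ω‖₁·‖ω‖₂^{1/2}·‖x₂ω‖₁^{1/2}; in particular the kinetic energy E(ω) is finite. -/

import Mathlib

open MeasureTheory Real Set NNReal Filter Topology

noncomputable section

/-- The upper half plane `ℝ²₊`. -/
def H : Set (ℝ × ℝ) := {p | 0 < p.2}

/-- The half-plane Green function
`G(x,y) = (1/(4π)) log(1 + 4 x₂ y₂ / |x-y|²)` (Euclidean distance). -/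
def G (x y : ℝ × ℝ) : ℝ :=
  (1 / (4 * π)) * Real.log (1 + 4 * x.2 * y.2 / ((x.1 - y.1) ^ 2 + (x.2 - y.2) ^ 2))

/-- The potential `𝒢[ω](x) = ∫_{ℝ²₊} G(x,y) ω(y) dy`. -/
def Gpot (ω : ℝ × ℝ → ℝ) (x : ℝ × ℝ) : ℝ := ∫ y in H, G x y * ω y

/-- The kinetic energy `E(ω) = (1/2) ∫∫ G(x,y) ω(x) ω(y) dy dx`. -/
def energy (ω : ℝ × ℝ → ℝ) : ℝ :=
  (1 / 2) * ∫ x in H, ∫ y in H, G x y * ω x * ω y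

/-- The `L¹(ℝ²₊)` norm (mass). -/
def norm1 (ω : ℝ × ℝ → ℝ) : ℝ := ∫ x in H, |ω x|

/-- The `L²(ℝ²₊)` norm. -/
def norm2 (ω : ℝ × ℝ → ℝ) : ℝ := (∫ x in H, ω x ^ 2) ^ ((1 : ℝ) / 2)

/-- The impulse `‖x₂ ω‖₁ = ∫_{ℝ²₊} x₂ |ω(x)| dx`. -/
def impulse (ω : ℝ × ℝ → ℝ) : ℝ := ∫ x in H, x.2 * |ω x|

/-- `ω ∈ (L¹ ∩ L²)(ℝ²₊)`. -/
def MemL1L2 (ω : ℝ × ℝ → ℝ) : Prop :=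
  Integrable ω (volume.restrict H) ∧ Integrable (fun x => ω x ^ 2) (volume.restrict H)

/-- Finiteness of the impulse `‖x₂ ω‖₁ < ∞`. -/
def ImpulseFinite (ω : ℝ × ℝ → ℝ) : Prop :=
  Integrable (fun x : ℝ × ℝ => x.2 * |ω x|) (volume.restrict H)

/-- The admissible class `K_M`: patches `ω = 1_A` a.e. on `ℝ²₊` with
impulse `∫_A x₂ = M` and mass `|A| ≤ 1`. -/
def memK (M : ℝ) (ω : ℝ × ℝ → ℝ) : Prop :=
  Integrable ω (volume.restrict H) ∧
  ∃ A : Set (ℝ × ℝ), A ⊆ H ∧ MeasurableSet A ∧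
    (∀ᵐ x ∂volume.restrict H, ω x = A.indicator (fun _ => (1 : ℝ)) x) ∧
    (∫ x in A, x.2) = M ∧ volume A ≤ 1

/-- The admissible class `K_{M,∞}`: patches `ω = 1_A` a.e. on `ℝ²₊` with
impulse `∫_A x₂ = M`, without any mass bound. -/
def memKinf (M : ℝ) (ω : ℝ × ℝ → ℝ) : Prop :=
  Integrable ω (volume.restrict H) ∧
  ∃ A : Set (ℝ × ℝ), A ⊆ H ∧ MeasurableSet A ∧
    (∀ᵐ x ∂volume.restrict H, ω x = A.indicator (fun _ => (1 : ℝ)) x) ∧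
    (∫ x in A, x.2) = M

/-- The relaxed admissible class `K̃_M`: measurable `0 ≤ ω ≤ 1` with
mass `≤ 1` and impulse `≤ M`. -/
def memKt (M : ℝ) (ω : ℝ × ℝ → ℝ) : Prop :=
  Integrable ω (volume.restrict H) ∧
  (∀ᵐ x ∂volume.restrict H, 0 ≤ ω x ∧ ω x ≤ 1) ∧
  norm1 ω ≤ 1 ∧
  Integrable (fun x : ℝ × ℝ => x.2 * |ω x|) (volume.restrict H) ∧
  impulse ω ≤ M

/-- The set of maximizers `S_M` of the energy over `K_M`. -/
def memS (M : ℝ) (ω : ℝ × ℝ → ℝ) : Prop :=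
  memK M ω ∧ ∀ ω' : ℝ × ℝ → ℝ, memK M ω' → energy ω' ≤ energy ω

/-- The maximal energy `I_M` over `K_M`. -/
def Isup (M : ℝ) : ℝ := sSup (energy '' {ω | memK M ω})

/-- The maximal energy `I_{1,∞}` over `K_{1,∞}`. -/
def IsupInf : ℝ := sSup (energy '' {ω | memKinf 1 ω})

/-- The Steiner symmetry condition for a set `Ω ⊆ ℝ²₊`. -/
def SteinerSet (Ω : Set (ℝ × ℝ)) : Prop :=
  (∀ x₁ x₂ : ℝ, 0 < x₂ → (((x₁, x₂) : ℝ × ℝ) ∈ Ω ↔ ((-x₁, x₂) : ℝ × ℝ) ∈ Ω)) ∧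
  (∀ x₂ : ℝ, 0 < x₂ → ∀ a b : ℝ, 0 ≤ a → a ≤ b →
    ((b, x₂) : ℝ × ℝ) ∈ Ω → ((a, x₂) : ℝ × ℝ) ∈ Ω)

/-- The Steiner symmetry condition for a nonnegative function on `ℝ²₊`. -/
def SteinerFn (f : ℝ × ℝ → ℝ) : Prop :=
  (∀ x₁ x₂ : ℝ, 0 < x₂ → f (x₁, x₂) = f (-x₁, x₂)) ∧
  (∀ x₂ : ℝ, 0 < x₂ → ∀ a b : ℝ, 0 ≤ a → a ≤ b → f (b, x₂) ≤ f (a, x₂))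


lemma log1p_le {t : ℝ} (ht : 0 ≤ t) : Real.log (1 + t) ≤ t := by
  have := Real.log_le_sub_one_of_pos (x := 1 + t) (by linarith)
  linarith

lemma log1p_nonneg {t : ℝ} (ht : 0 ≤ t) : 0 ≤ Real.log (1 + t) :=
  Real.log_nonneg (by linarith)

lemma log1p_mul_le {A B : ℝ} (hA : 0 ≤ A) (hB : 0 ≤ B) :
    Real.log (1 + A * B) ≤ Real.log (1 + A) + Real.log (1 + B) := by
  rw [← Real.log_mul (by positivity) (by positivity)]
  apply Real.log_le_log (by positivity)
  nlinarith

def g1 (δ t : ℝ) : ℝ := Real.log (1 + 2 * δ^2 / t^2)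

def Ld (δ : ℝ) (x y : ℝ × ℝ) : ℝ :=
  Real.log (1 + 2 * δ^2 / ((x.1 - y.1) ^ 2 + (x.2 - y.2) ^ 2))

lemma Ld_nonneg (δ : ℝ) (x y : ℝ × ℝ) : 0 ≤ Ld δ x y :=
  log1p_nonneg (by positivity)

lemma g1_nonneg (δ t : ℝ) : 0 ≤ g1 δ t := log1p_nonneg (by positivity)

lemma G_nonneg {x y : ℝ × ℝ} (hx : 0 ≤ x.2) (hy : 0 ≤ y.2) : 0 ≤ G x y := by
  have : (0:ℝ) < π := Real.pi_pos
  have h4 : 0 ≤ 4 * x.2 * y.2 / ((x.1 - y.1) ^ 2 + (x.2 - y.2) ^ 2) := by positivity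
  exact mul_nonneg (by positivity) (log1p_nonneg h4)

lemma G_le {δ : ℝ} (hδ : 0 < δ) {x y : ℝ × ℝ} (hx : 0 ≤ x.2) (hy : 0 ≤ y.2) :
    G x y ≤ (1 / (4 * π)) * (Real.sqrt 2 / δ * (x.2 + y.2) + Ld δ x y) := by
  have hπ : (0:ℝ) < π := Real.pi_pos
  have hc : (0:ℝ) ≤ 1 / (4 * π) := by positivity
  unfold G Ld
  set r2 := (x.1 - y.1) ^ 2 + (x.2 - y.2) ^ 2 with hr2
  apply mul_le_mul_of_nonneg_left _ hc
  have hr2n : 0 ≤ r2 := by positivity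
  rcases eq_or_lt_of_le hr2n with h0 | hpos
  · rw [← h0]
    simp only [div_zero, mul_zero, add_zero, Real.log_one]
    positivity
  · have key : 4 * x.2 * y.2 / r2 = (2 * x.2 * y.2 / δ^2) * (2 * δ^2 / r2) := by
      field_simp; ring
    have h1 : Real.log (1 + 4 * x.2 * y.2 / r2) ≤
        Real.log (1 + 2 * x.2 * y.2 / δ^2) + Real.log (1 + 2 * δ^2 / r2) := by
      rw [key]
      exact log1p_mul_le (by positivity) (by positivity)
    have hs2 : Real.sqrt 2 * Real.sqrt 2 = 2 := Real.mul_self_sqrt (by norm_num)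
    have hs2n : 0 ≤ Real.sqrt 2 := Real.sqrt_nonneg 2
    have h2 : Real.log (1 + 2 * x.2 * y.2 / δ^2) ≤ Real.sqrt 2 / δ * (x.2 + y.2) := by
      have e1 : Real.sqrt 2 * x.2 * (Real.sqrt 2 * y.2) = 2 * (x.2 * y.2) := by
        linear_combination x.2 * y.2 * hs2
      have key2 : 2 * x.2 * y.2 / δ^2 = (Real.sqrt 2 * x.2 / δ) * (Real.sqrt 2 * y.2 / δ) := by
        rw [div_mul_div_comm, e1, ← sq]; ring
      calc Real.log (1 + 2 * x.2 * y.2 / δ^2)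
          ≤ Real.log (1 + Real.sqrt 2 * x.2 / δ) + Real.log (1 + Real.sqrt 2 * y.2 / δ) := by
            rw [key2]; exact log1p_mul_le (by positivity) (by positivity)
        _ ≤ Real.sqrt 2 * x.2 / δ + Real.sqrt 2 * y.2 / δ :=
            add_le_add (log1p_le (by positivity)) (log1p_le (by positivity))
        _ = Real.sqrt 2 / δ * (x.2 + y.2) := by ring
    linarith

lemma log1p_le_four_rpow {u : ℝ} (hu : 0 ≤ u) :
    Real.log (1 + u) ≤ 4 * u ^ ((1:ℝ)/4) := by
  set v := u ^ ((1:ℝ)/4) with hv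
  have hv0 : 0 ≤ v := Real.rpow_nonneg hu _
  have hvu : v ^ (4:ℕ) = u := by
    rw [hv, ← Real.rpow_natCast (u ^ ((1:ℝ)/4)) 4, ← Real.rpow_mul hu]
    norm_num
  have h1 : (1:ℝ) + u ≤ (1 + v) ^ (4:ℕ) := by
    nlinarith [sq_nonneg v, sq_nonneg (v - 1), sq_nonneg (v*v - v)]
  calc Real.log (1 + u) ≤ Real.log ((1 + v) ^ (4:ℕ)) := Real.log_le_log (by linarith) h1
    _ = 4 * Real.log (1 + v) := by rw [Real.log_pow]; norm_num
    _ ≤ 4 * v := by nlinarith [log1p_le hv0]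


lemma g1_measurable (δ : ℝ) : Measurable (g1 δ) := by
  exact Real.measurable_log.comp (by fun_prop)


def mfn (δ : ℝ) : ℝ → ℝ := fun s => if s ≤ δ then 5*Real.sqrt δ/Real.sqrt s else 2*δ^2/s^2

lemma mfn_nonneg (δ : ℝ) (s : ℝ) : 0 ≤ mfn δ s := by
  unfold mfn; split <;> positivity

lemma g1_le_mfn {δ : ℝ} (hδ : 0 < δ) (t : ℝ) : g1 δ t ≤ mfn δ |t| := by
  rcases eq_or_ne t 0 with rfl | ht
  · simp [g1, mfn, hδ.le, Real.sqrt_zero]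
  · have ha : 0 < |t| := abs_pos.mpr ht
    have ht2 : t^2 = |t|^2 := (sq_abs t).symm
    unfold mfn
    split
    · rename_i hle
      -- |t| ≤ δ
      have hu : (0:ℝ) ≤ 2 * δ^2 / t^2 := by positivity
      refine le_trans (log1p_le_four_rpow hu) ?_
      have hL0 : 0 ≤ 4 * (2 * δ^2 / t^2) ^ ((1:ℝ)/4) := by positivity
      have hR0 : 0 ≤ 5*Real.sqrt δ/Real.sqrt |t| := by positivity
      have key : (4 * (2 * δ^2 / t^2) ^ ((1:ℝ)/4)) ^ (4:ℕ) ≤ (5*Real.sqrt δ/Real.sqrt |t|) ^ (4:ℕ) := by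
        have e1 : ((2 * δ^2 / t^2) ^ ((1:ℝ)/4)) ^ (4:ℕ) = 2 * δ^2 / t^2 := by
          rw [← Real.rpow_natCast ((2 * δ^2 / t^2) ^ ((1:ℝ)/4)) 4, ← Real.rpow_mul hu]
          norm_num
        have e2 : (Real.sqrt δ) ^ (4:ℕ) = δ^2 := by
          rw [show (4:ℕ) = 2*2 from rfl, pow_mul, Real.sq_sqrt hδ.le]
        have e3 : (Real.sqrt |t|) ^ (4:ℕ) = t^2 := by
          rw [show (4:ℕ) = 2*2 from rfl, pow_mul, Real.sq_sqrt ha.le, ← ht2]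
        rw [mul_pow, e1, div_pow, mul_pow, e2, e3]
        have hq : (0:ℝ) ≤ δ^2/t^2 := by positivity
        calc (4:ℝ)^4 * (2*δ^2/t^2) = 512*(δ^2/t^2) := by ring
          _ ≤ 625*(δ^2/t^2) := by nlinarith
          _ = 5^4*δ^2/t^2 := by ring
      calc 4 * (2 * δ^2 / t^2) ^ ((1:ℝ)/4)
          = ((4 * (2 * δ^2 / t^2) ^ ((1:ℝ)/4)) ^ (4:ℕ)) ^ ((1:ℝ)/4) := by
            rw [← Real.rpow_natCast _ 4, ← Real.rpow_mul hL0]; norm_num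
        _ ≤ ((5*Real.sqrt δ/Real.sqrt |t|) ^ (4:ℕ)) ^ ((1:ℝ)/4) := by
            apply Real.rpow_le_rpow (by positivity) _ (by norm_num)
            exact_mod_cast key
        _ = 5*Real.sqrt δ/Real.sqrt |t| := by
            rw [← Real.rpow_natCast _ 4, ← Real.rpow_mul hR0]; norm_num
    · rename_i hgt
      refine le_trans (log1p_le (by positivity)) ?_
      rw [ht2]

lemma mfn_eq_one {δ : ℝ} (hδ : 0 < δ) {s : ℝ} (hs0 : 0 < s) (hs : s ≤ δ) :
    mfn δ s = 5*Real.sqrt δ * s ^ (-(1/2) : ℝ) := by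
  unfold mfn
  rw [if_pos hs, Real.rpow_neg hs0.le, ← Real.sqrt_eq_rpow, div_eq_mul_inv]

lemma mfn_eq_two {δ : ℝ} (hδ : 0 < δ) {s : ℝ} (hs : δ < s) :
    mfn δ s = 2*δ^2 * s ^ (-2 : ℝ) := by
  have hs0 : 0 < s := hδ.trans hs
  unfold mfn
  rw [if_neg (not_le.mpr hs), Real.rpow_neg hs0.le, Real.rpow_two, div_eq_mul_inv]

lemma integrableOn_mfn {δ : ℝ} (hδ : 0 < δ) : IntegrableOn (mfn δ) (Ioi 0) := by
  have h1 : IntegrableOn (fun s : ℝ => 5*Real.sqrt δ * s ^ (-(1/2) : ℝ)) (Ioc 0 δ) := by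
    have := (intervalIntegral.intervalIntegrable_rpow' (a := 0) (b := δ) (r := (-(1/2) : ℝ))
      (by norm_num)).1
    exact this.const_mul _
  have h1' : IntegrableOn (mfn δ) (Ioc 0 δ) := by
    apply h1.congr_fun _ measurableSet_Ioc
    intro s hs
    exact (mfn_eq_one hδ hs.1 hs.2).symm
  have h2 : IntegrableOn (fun s : ℝ => 2*δ^2 * s ^ (-2:ℝ)) (Ioi δ) :=
    (integrableOn_Ioi_rpow_of_lt (by norm_num) hδ).const_mul _
  have h2' : IntegrableOn (mfn δ) (Ioi δ) := by
    apply h2.congr_fun _ measurableSet_Ioi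
    intro s hs
    exact (mfn_eq_two hδ hs).symm
  rw [← Ioc_union_Ioi_eq_Ioi hδ.le]
  exact h1'.union h2'

lemma integral_mfn {δ : ℝ} (hδ : 0 < δ) : ∫ s in Ioi (0:ℝ), mfn δ s ≤ 12 * δ := by
  have h1 : IntegrableOn (mfn δ) (Ioc 0 δ) := (integrableOn_mfn hδ).mono_set Ioc_subset_Ioi_self
  have h2 : IntegrableOn (mfn δ) (Ioi δ) :=
    (integrableOn_mfn hδ).mono_set (Ioi_subset_Ioi hδ.le)
  have hsplit : ∫ s in Ioi (0:ℝ), mfn δ s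
      = (∫ s in Ioc (0:ℝ) δ, mfn δ s) + ∫ s in Ioi δ, mfn δ s := by
    rw [← setIntegral_union (Ioc_disjoint_Ioi le_rfl) measurableSet_Ioi h1 h2,
      Ioc_union_Ioi_eq_Ioi hδ.le]
  have e1 : (∫ s in Ioc (0:ℝ) δ, mfn δ s) = 10 * δ := by
    rw [setIntegral_congr_fun measurableSet_Ioc
      (g := fun s : ℝ => 5*Real.sqrt δ * s ^ (-(1/2) : ℝ))
      (fun s hs => mfn_eq_one hδ hs.1 hs.2)]
    rw [← intervalIntegral.integral_of_le hδ.le, intervalIntegral.integral_const_mul,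
      integral_rpow (Or.inl (by norm_num))]
    rw [show ((-(1/2) : ℝ) + 1) = 1/2 by norm_num, Real.zero_rpow (by norm_num),
      ← Real.sqrt_eq_rpow]
    rw [sub_zero, div_eq_mul_inv, show ((1:ℝ)/2)⁻¹ = 2 by norm_num]
    rw [show 5*Real.sqrt δ * (Real.sqrt δ * 2) = 10 * (Real.sqrt δ * Real.sqrt δ) by ring,
      Real.mul_self_sqrt hδ.le]
  have e2 : (∫ s in Ioi δ, mfn δ s) = 2 * δ := by
    rw [setIntegral_congr_fun measurableSet_Ioi (g := fun s : ℝ => 2*δ^2 * s ^ (-2:ℝ))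
      (fun s hs => mfn_eq_two hδ hs)]
    rw [integral_const_mul, integral_Ioi_rpow_of_lt (by norm_num) hδ]
    rw [show (-2:ℝ) + 1 = -1 by norm_num, Real.rpow_neg_one]
    field_simp
  rw [hsplit, e1, e2]; linarith

lemma integrable_mfn_abs {δ : ℝ} (hδ : 0 < δ) : Integrable (fun t : ℝ => mfn δ |t|) := by
  have hIoi : IntegrableOn (fun t : ℝ => mfn δ |t|) (Ioi 0) := by
    apply (integrableOn_mfn hδ).congr_fun _ measurableSet_Ioi
    intro s hs
    show mfn δ s = mfn δ |s|
    rw [abs_of_pos hs]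
  have hIic : IntegrableOn (fun t : ℝ => mfn δ |t|) (Iic 0) := by
    have m : MeasurableEmbedding (fun x : ℝ => -x) :=
      (Homeomorph.neg ℝ).measurableEmbedding
    have h0 : IntegrableOn (fun t : ℝ => mfn δ |t|) (Ici 0) :=
      (integrableOn_Ici_iff_integrableOn_Ioi (f := fun t : ℝ => mfn δ |t|) (b := 0)).mpr hIoi
    rw [show (volume : Measure ℝ) = Measure.map (fun x : ℝ => -x) volume from
      (Measure.map_neg_eq_self _).symm, m.integrableOn_map_iff]
    simp only [Function.comp_def, abs_neg, neg_preimage, neg_Iic, neg_zero]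
    exact h0
  rw [← integrableOn_univ, ← Set.Iic_union_Ioi (a := (0:ℝ))]
  exact hIic.union hIoi

lemma lintegral_g1_le {δ : ℝ} (hδ : 0 < δ) :
    ∫⁻ t : ℝ, ENNReal.ofReal (g1 δ t) ≤ ENNReal.ofReal (24 * δ) := by
  calc ∫⁻ t : ℝ, ENNReal.ofReal (g1 δ t)
      ≤ ∫⁻ t : ℝ, ENNReal.ofReal (mfn δ |t|) :=
        lintegral_mono fun t => ENNReal.ofReal_le_ofReal (g1_le_mfn hδ t)
    _ = ENNReal.ofReal (∫ t : ℝ, mfn δ |t|) := by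
        rw [← ofReal_integral_eq_lintegral_ofReal (integrable_mfn_abs hδ)
          (Filter.Eventually.of_forall fun t => mfn_nonneg δ |t|)]
    _ ≤ ENNReal.ofReal (24 * δ) := by
        apply ENNReal.ofReal_le_ofReal
        rw [integral_comp_abs (f := mfn δ)]
        linarith [integral_mfn hδ]

lemma Ld_measurable (δ : ℝ) (x : ℝ × ℝ) : Measurable (fun y => Ld δ x y) := by
  unfold Ld
  exact Real.measurable_log.comp (by fun_prop)

lemma null_fst (x : ℝ × ℝ) : volume {y : ℝ × ℝ | x.1 - y.1 = 0} = 0 := by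
  have : {y : ℝ × ℝ | x.1 - y.1 = 0} = ({x.1} : Set ℝ) ×ˢ (univ : Set ℝ) := by
    ext y
    simp only [mem_setOf_eq, sub_eq_zero, Set.mem_prod, mem_singleton_iff, mem_univ, and_true]
    exact eq_comm
  rw [this, Measure.volume_eq_prod, Measure.prod_prod]
  simp

lemma null_snd (x : ℝ × ℝ) : volume {y : ℝ × ℝ | x.2 - y.2 = 0} = 0 := by
  have : {y : ℝ × ℝ | x.2 - y.2 = 0} = (univ : Set ℝ) ×ˢ ({x.2} : Set ℝ) := by
    ext y
    simp only [mem_setOf_eq, sub_eq_zero, Set.mem_prod, mem_singleton_iff, mem_univ, true_and]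
    exact eq_comm
  rw [this, Measure.volume_eq_prod, Measure.prod_prod]
  simp

lemma lintegral_Ld_sq_le {δ : ℝ} (hδ : 0 < δ) (x : ℝ × ℝ) :
    ∫⁻ y : ℝ × ℝ, ENNReal.ofReal (Ld δ x y) ^ (2:ℝ) ≤ ENNReal.ofReal (24*δ) ^ (2:ℝ) := by
  have step1 : ∫⁻ y : ℝ × ℝ, ENNReal.ofReal (Ld δ x y) ^ (2:ℝ)
      ≤ ∫⁻ y : ℝ × ℝ, ENNReal.ofReal (g1 δ (x.1 - y.1)) * ENNReal.ofReal (g1 δ (x.2 - y.2)) := by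
    apply lintegral_mono_ae
    have h1 : ∀ᵐ y : ℝ × ℝ, x.1 - y.1 ≠ 0 := by
      rw [ae_iff]; simpa using null_fst x
    have h2 : ∀ᵐ y : ℝ × ℝ, x.2 - y.2 ≠ 0 := by
      rw [ae_iff]; simpa using null_snd x
    filter_upwards [h1, h2] with y hy1 hy2
    set a := x.1 - y.1
    set b := x.2 - y.2
    have ha : 0 < a^2 := by positivity
    have hb : 0 < b^2 := by positivity
    have hab : 0 < a^2 + b^2 := by positivity
    have hLa : Ld δ x y ≤ g1 δ a := by
      unfold Ld g1
      apply Real.log_le_log (by positivity)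
      have : 2*δ^2/(a^2+b^2) ≤ 2*δ^2/a^2 :=
        div_le_div_of_nonneg_left (by positivity) ha (by linarith)
      linarith
    have hLb : Ld δ x y ≤ g1 δ b := by
      unfold Ld g1
      apply Real.log_le_log (by positivity)
      have : 2*δ^2/(a^2+b^2) ≤ 2*δ^2/b^2 :=
        div_le_div_of_nonneg_left (by positivity) hb (by linarith)
      linarith
    have hL0 : 0 ≤ Ld δ x y := Ld_nonneg δ x y
    calc ENNReal.ofReal (Ld δ x y) ^ (2:ℝ)
        = ENNReal.ofReal (Ld δ x y * Ld δ x y) := by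
          rw [ENNReal.rpow_two, sq, ← ENNReal.ofReal_mul hL0]
      _ ≤ ENNReal.ofReal (g1 δ a * g1 δ b) :=
          ENNReal.ofReal_le_ofReal (mul_le_mul hLa hLb hL0 (g1_nonneg δ a))
      _ = ENNReal.ofReal (g1 δ a) * ENNReal.ofReal (g1 δ b) :=
          ENNReal.ofReal_mul (g1_nonneg δ a)
  have step2 : ∫⁻ y : ℝ × ℝ, ENNReal.ofReal (g1 δ (x.1 - y.1)) * ENNReal.ofReal (g1 δ (x.2 - y.2))
      = (∫⁻ t : ℝ, ENNReal.ofReal (g1 δ (x.1 - t))) * ∫⁻ t : ℝ, ENNReal.ofReal (g1 δ (x.2 - t)) := by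
    rw [Measure.volume_eq_prod]
    exact lintegral_prod_mul
      (((g1_measurable δ).comp (measurable_const.sub measurable_id)).ennreal_ofReal).aemeasurable
      (((g1_measurable δ).comp (measurable_const.sub measurable_id)).ennreal_ofReal).aemeasurable
  have tr : ∀ c : ℝ, ∫⁻ t : ℝ, ENNReal.ofReal (g1 δ (c - t)) = ∫⁻ t : ℝ, ENNReal.ofReal (g1 δ t) :=
    fun c => (Measure.measurePreserving_sub_left volume c).lintegral_comp
      ((g1_measurable δ).ennreal_ofReal)
  calc ∫⁻ y : ℝ × ℝ, ENNReal.ofReal (Ld δ x y) ^ (2:ℝ)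
      ≤ _ := step1
    _ = (∫⁻ t : ℝ, ENNReal.ofReal (g1 δ t)) * (∫⁻ t : ℝ, ENNReal.ofReal (g1 δ t)) := by
        rw [step2, tr, tr]
    _ ≤ ENNReal.ofReal (24*δ) * ENNReal.ofReal (24*δ) :=
        mul_le_mul' (lintegral_g1_le hδ) (lintegral_g1_le hδ)
    _ = ENNReal.ofReal (24*δ) ^ (2:ℝ) := by rw [ENNReal.rpow_two, sq]

lemma lintegral_Ld_mul_le {δ : ℝ} (hδ : 0 < δ) (x : ℝ × ℝ) {W : ℝ × ℝ → ENNReal}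
    (hW : AEMeasurable W (volume.restrict H)) :
    ∫⁻ y in H, ENNReal.ofReal (Ld δ x y) * W y
      ≤ ENNReal.ofReal (24*δ) * (∫⁻ y in H, W y ^ (2:ℝ)) ^ ((1:ℝ)/2) := by
  have hpq : Real.HolderConjugate 2 2 := Real.holderConjugate_iff.mpr ⟨by norm_num, by norm_num⟩
  have hf : AEMeasurable (fun y => ENNReal.ofReal (Ld δ x y)) (volume.restrict H) :=
    ((Ld_measurable δ x).ennreal_ofReal).aemeasurable
  have := ENNReal.lintegral_mul_le_Lp_mul_Lq (volume.restrict H) hpq hf hW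
  refine le_trans this ?_
  apply mul_le_mul' _ le_rfl
  have h1 : ∫⁻ y in H, ENNReal.ofReal (Ld δ x y) ^ (2:ℝ)
      ≤ ENNReal.ofReal (24*δ) ^ (2:ℝ) :=
    le_trans (setLIntegral_le_lintegral _ _) (lintegral_Ld_sq_le hδ x)
  calc (∫⁻ y in H, ENNReal.ofReal (Ld δ x y) ^ (2:ℝ)) ^ ((1:ℝ)/2)
      ≤ (ENNReal.ofReal (24*δ) ^ (2:ℝ)) ^ ((1:ℝ)/2) :=
        ENNReal.rpow_le_rpow h1 (by norm_num)
    _ = ENNReal.ofReal (24*δ) := by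
        rw [← ENNReal.rpow_mul]; norm_num

lemma measurableSet_H : MeasurableSet H :=
  measurableSet_lt measurable_const measurable_snd

lemma norm1_nonneg (ω : ℝ × ℝ → ℝ) : 0 ≤ norm1 ω :=
  setIntegral_nonneg measurableSet_H fun x _ => abs_nonneg _

lemma impulse_nonneg (ω : ℝ × ℝ → ℝ) : 0 ≤ impulse ω :=
  setIntegral_nonneg measurableSet_H fun x hx => mul_nonneg (le_of_lt hx) (abs_nonneg _)

lemma norm2_nonneg (ω : ℝ × ℝ → ℝ) : 0 ≤ norm2 ω :=
  Real.rpow_nonneg (setIntegral_nonneg measurableSet_H fun x _ => sq_nonneg _) _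

lemma double_bound (ω : ℝ × ℝ → ℝ) (hω1 : Integrable ω (volume.restrict H))
    (hω2 : Integrable (fun x => ω x ^ 2) (volume.restrict H))
    (hI : Integrable (fun x : ℝ × ℝ => x.2 * |ω x|) (volume.restrict H))
    {δ : ℝ} (hδ : 0 < δ) :
    ∫⁻ x in H, ∫⁻ y in H, ENNReal.ofReal |G x y * ω x * ω y|
      ≤ ENNReal.ofReal ((1/(4*π)) * (Real.sqrt 2 / δ * (norm1 ω * impulse ω)
          + (Real.sqrt 2 / δ * (impulse ω * norm1 ω)
            + 24 * δ * norm2 ω * norm1 ω))) := by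
  have hπ : (0:ℝ) < π := Real.pi_pos
  set μ := volume.restrict H with hμ
  set W : ℝ × ℝ → ENNReal := fun x => ENNReal.ofReal |ω x| with hWdef
  have hW : AEMeasurable W μ := (hω1.abs.aemeasurable).ennreal_ofReal
  set n1 := norm1 ω
  set n2 := norm2 ω
  set p := impulse ω
  have hn1 : 0 ≤ n1 := norm1_nonneg ω
  have hn2 : 0 ≤ n2 := norm2_nonneg ω
  have hp : 0 ≤ p := impulse_nonneg ω
  -- identities
  have hN1 : ∫⁻ x in H, W x = ENNReal.ofReal n1 := by
    rw [← ofReal_integral_eq_lintegral_ofReal hω1.abs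
      (Filter.Eventually.of_forall fun x => abs_nonneg _)]
    rfl
  have hP : ∫⁻ x in H, (ENNReal.ofReal x.2 * W x) = ENNReal.ofReal p := by
    have hcong : ∀ᵐ x ∂μ, ENNReal.ofReal x.2 * W x = ENNReal.ofReal (x.2 * |ω x|) := by
      filter_upwards [ae_restrict_mem measurableSet_H] with x hx
      rw [ENNReal.ofReal_mul (le_of_lt hx)]
    have hnn : 0 ≤ᵐ[μ] fun x : ℝ × ℝ => x.2 * |ω x| := by
      filter_upwards [ae_restrict_mem measurableSet_H] with x hx
      exact mul_nonneg (le_of_lt hx) (abs_nonneg _)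
    rw [lintegral_congr_ae hcong, ← ofReal_integral_eq_lintegral_ofReal hI hnn]
    rfl
  have hN2 : (∫⁻ x in H, (W x) ^ (2:ℝ)) ^ ((1:ℝ)/2) = ENNReal.ofReal n2 := by
    have hcong : ∀ x, (W x) ^ (2:ℝ) = ENNReal.ofReal (ω x ^ 2) := fun x => by
      rw [ENNReal.rpow_two, ← ENNReal.ofReal_pow (abs_nonneg _), sq_abs]
    rw [lintegral_congr hcong,
      ← ofReal_integral_eq_lintegral_ofReal hω2
        (Filter.Eventually.of_forall fun x => sq_nonneg _)]
    rw [ENNReal.ofReal_rpow_of_nonneg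
      (setIntegral_nonneg measurableSet_H fun x _ => sq_nonneg _) (by norm_num)]
    rfl
  -- constants
  set c0 : ENNReal := ENNReal.ofReal (1/(4*π)) with hc0
  set c1 : ENNReal := c0 * ENNReal.ofReal (Real.sqrt 2 / δ) with hc1
  have hc0ne : c0 ≠ ⊤ := ENNReal.ofReal_ne_top
  have hc1ne : c1 ≠ ⊤ := ENNReal.mul_ne_top hc0ne ENNReal.ofReal_ne_top
  have hWne : ∀ x, W x ≠ ⊤ := fun x => ENNReal.ofReal_ne_top
  -- inner bound
  have inner : ∀ x, x ∈ H →
      ∫⁻ y in H, ENNReal.ofReal |G x y * ω x * ω y|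
        ≤ (c1 * ENNReal.ofReal n1) * (ENNReal.ofReal x.2 * W x)
          + ((c1 * ENNReal.ofReal p) + c0 * (ENNReal.ofReal (24*δ) * ENNReal.ofReal n2)) * W x := by
    intro x hx
    have hx2 : 0 < x.2 := hx
    -- three integrand pieces
    set f1 : ℝ × ℝ → ENNReal := fun y => (c1 * (ENNReal.ofReal x.2 * W x)) * W y with hf1
    set f2 : ℝ × ℝ → ENNReal := fun y => (c1 * W x) * (ENNReal.ofReal y.2 * W y) with hf2
    set f3 : ℝ × ℝ → ENNReal := fun y => (c0 * W x) * (ENNReal.ofReal (Ld δ x y) * W y) with hf3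
    have hptw : ∀ᵐ y ∂μ, ENNReal.ofReal |G x y * ω x * ω y| ≤ f1 y + f2 y + f3 y := by
      filter_upwards [ae_restrict_mem measurableSet_H] with y hy
      have hy2 : 0 < y.2 := hy
      have hGnn : 0 ≤ G x y := G_nonneg hx2.le hy2.le
      have habs : |G x y * ω x * ω y| = G x y * |ω x| * |ω y| := by
        rw [abs_mul, abs_mul, abs_of_nonneg hGnn]
      have hBnn1 : 0 ≤ Real.sqrt 2 / δ * (x.2 + y.2) := by positivity
      have hBnn2 : 0 ≤ Ld δ x y := Ld_nonneg δ x y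
      have hGle : ENNReal.ofReal (G x y)
          ≤ c0 * (ENNReal.ofReal (Real.sqrt 2 / δ) * (ENNReal.ofReal x.2 + ENNReal.ofReal y.2)
              + ENNReal.ofReal (Ld δ x y)) := by
        calc ENNReal.ofReal (G x y)
            ≤ ENNReal.ofReal ((1/(4*π)) * (Real.sqrt 2 / δ * (x.2 + y.2) + Ld δ x y)) :=
              ENNReal.ofReal_le_ofReal (G_le hδ hx2.le hy2.le)
          _ = c0 * (ENNReal.ofReal (Real.sqrt 2 / δ) * (ENNReal.ofReal x.2 + ENNReal.ofReal y.2)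
              + ENNReal.ofReal (Ld δ x y)) := by
              rw [ENNReal.ofReal_mul (by positivity), ENNReal.ofReal_add hBnn1 hBnn2,
                ENNReal.ofReal_mul (by positivity), ENNReal.ofReal_add hx2.le hy2.le]
      calc ENNReal.ofReal |G x y * ω x * ω y|
          = ENNReal.ofReal (G x y) * W x * W y := by
            rw [habs, ENNReal.ofReal_mul (by positivity), ENNReal.ofReal_mul hGnn]
        _ ≤ (c0 * (ENNReal.ofReal (Real.sqrt 2 / δ) * (ENNReal.ofReal x.2 + ENNReal.ofReal y.2)
              + ENNReal.ofReal (Ld δ x y))) * W x * W y :=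
            mul_le_mul_left (mul_le_mul_left hGle _) _
        _ = f1 y + f2 y + f3 y := by
            simp only [hf1, hf2, hf3, hc1]
            ring
    have hm1 : AEMeasurable f1 μ := hW.const_mul _
    have hm2 : AEMeasurable f2 μ :=
      ((measurable_snd.ennreal_ofReal.aemeasurable.mul hW).const_mul _)
    have hi1 : ∫⁻ y in H, f1 y = (c1 * (ENNReal.ofReal x.2 * W x)) * ENNReal.ofReal n1 := by
      rw [hf1, lintegral_const_mul' _ _ (ENNReal.mul_ne_top hc1ne
        (ENNReal.mul_ne_top ENNReal.ofReal_ne_top (hWne x))), hN1]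
    have hi2 : ∫⁻ y in H, f2 y = (c1 * W x) * ENNReal.ofReal p := by
      rw [hf2, lintegral_const_mul' _ _ (ENNReal.mul_ne_top hc1ne (hWne x)), hP]
    have hi3 : ∫⁻ y in H, f3 y ≤ (c0 * W x) * (ENNReal.ofReal (24*δ) * ENNReal.ofReal n2) := by
      rw [hf3, lintegral_const_mul' _ _ (ENNReal.mul_ne_top hc0ne (hWne x))]
      apply mul_le_mul_right
      rw [← hN2]
      exact lintegral_Ld_mul_le hδ x hW
    calc ∫⁻ y in H, ENNReal.ofReal |G x y * ω x * ω y|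
        ≤ ∫⁻ y in H, (f1 y + f2 y + f3 y) := lintegral_mono_ae hptw
      _ = (∫⁻ y in H, f1 y) + (∫⁻ y in H, f2 y) + ∫⁻ y in H, f3 y := by
          rw [lintegral_add_left' (f := fun y => f1 y + f2 y) (hm1.add hm2) _, lintegral_add_left' hm1]
      _ ≤ (c1 * (ENNReal.ofReal x.2 * W x)) * ENNReal.ofReal n1
          + (c1 * W x) * ENNReal.ofReal p
          + (c0 * W x) * (ENNReal.ofReal (24*δ) * ENNReal.ofReal n2) := by
          rw [hi1, hi2]
          exact add_le_add le_rfl hi3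
      _ = (c1 * ENNReal.ofReal n1) * (ENNReal.ofReal x.2 * W x)
          + ((c1 * ENNReal.ofReal p) + c0 * (ENNReal.ofReal (24*δ) * ENNReal.ofReal n2)) * W x := by
          ring
  -- outer integral
  have houter : ∫⁻ x in H, ∫⁻ y in H, ENNReal.ofReal |G x y * ω x * ω y|
      ≤ (c1 * ENNReal.ofReal n1) * ENNReal.ofReal p
        + ((c1 * ENNReal.ofReal p) + c0 * (ENNReal.ofReal (24*δ) * ENNReal.ofReal n2))
          * ENNReal.ofReal n1 := by
    have hmono : ∫⁻ x in H, ∫⁻ y in H, ENNReal.ofReal |G x y * ω x * ω y|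
        ≤ ∫⁻ x in H, ((c1 * ENNReal.ofReal n1) * (ENNReal.ofReal x.2 * W x)
          + ((c1 * ENNReal.ofReal p) + c0 * (ENNReal.ofReal (24*δ) * ENNReal.ofReal n2)) * W x) := by
      apply lintegral_mono_ae
      filter_upwards [ae_restrict_mem measurableSet_H] with x hx
      exact inner x hx
    refine le_trans hmono ?_
    have hg1 : AEMeasurable (fun x : ℝ × ℝ => (c1 * ENNReal.ofReal n1) * (ENNReal.ofReal x.2 * W x)) μ :=
      (measurable_snd.ennreal_ofReal.aemeasurable.mul hW).const_mul _
    rw [lintegral_add_left' hg1]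
    rw [lintegral_const_mul' _ _ (ENNReal.mul_ne_top hc1ne ENNReal.ofReal_ne_top), hP]
    rw [lintegral_const_mul' _ _ (ENNReal.add_ne_top.mpr
      ⟨ENNReal.mul_ne_top hc1ne ENNReal.ofReal_ne_top,
        ENNReal.mul_ne_top hc0ne (ENNReal.mul_ne_top ENNReal.ofReal_ne_top ENNReal.ofReal_ne_top)⟩), hN1]
  refine le_trans houter ?_
  -- collapse to a single ofReal
  have e1 : (c1 * ENNReal.ofReal n1) * ENNReal.ofReal p
      = ENNReal.ofReal ((1/(4*π)) * (Real.sqrt 2 / δ * (n1 * p))) := by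
    rw [hc1, hc0, ← ENNReal.ofReal_mul (by positivity), ← ENNReal.ofReal_mul (by positivity),
      ← ENNReal.ofReal_mul (by positivity)]
    exact congrArg ENNReal.ofReal (by ring)
  have e2 : (c1 * ENNReal.ofReal p) * ENNReal.ofReal n1
      = ENNReal.ofReal ((1/(4*π)) * (Real.sqrt 2 / δ * (p * n1))) := by
    rw [hc1, hc0, ← ENNReal.ofReal_mul (by positivity), ← ENNReal.ofReal_mul (by positivity),
      ← ENNReal.ofReal_mul (by positivity)]
    exact congrArg ENNReal.ofReal (by ring)
  have e3 : (c0 * (ENNReal.ofReal (24*δ) * ENNReal.ofReal n2)) * ENNReal.ofReal n1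
      = ENNReal.ofReal ((1/(4*π)) * (24 * δ * n2 * n1)) := by
    rw [hc0, ← ENNReal.ofReal_mul (by positivity), ← ENNReal.ofReal_mul (by positivity),
      ← ENNReal.ofReal_mul (by positivity)]
    exact congrArg ENNReal.ofReal (by ring)
  rw [add_mul, e1, e2, e3, ← ENNReal.ofReal_add (by positivity) (by positivity),
    ← ENNReal.ofReal_add (by positivity) (by positivity)]
  exact ENNReal.ofReal_le_ofReal (le_of_eq (by ring))


/-- the energy double integral is bounded by
`C₂ ‖ω‖₁ ‖ω‖₂^{1/2} ‖x₂ω‖₁^{1/2}`; in particular the kinetic energy is finite. -/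
theorem energy_bound :
    ∃ C₂ : ℝ, 0 < C₂ ∧ ∀ ω : ℝ × ℝ → ℝ, MemL1L2 ω → ImpulseFinite ω →
      |∫ x in H, ∫ y in H, G x y * ω x * ω y| ≤
        C₂ * norm1 ω * norm2 ω ^ ((1 : ℝ) / 2) * impulse ω ^ ((1 : ℝ) / 2) ∧
      (∫⁻ x in H, ∫⁻ y in H, ENNReal.ofReal |G x y * ω x * ω y|) < ⊤ := by
  refine ⟨3, by norm_num, ?_⟩
  intro ω hω hI
  obtain ⟨hω1, hω2⟩ := hω
  set μ := volume.restrict H with hμ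
  set n1 := norm1 ω with hn1def
  set n2 := norm2 ω with hn2def
  set p := impulse ω with hpdef
  have hn1 : 0 ≤ n1 := norm1_nonneg ω
  have hn2 : 0 ≤ n2 := norm2_nonneg ω
  have hp : 0 ≤ p := impulse_nonneg ω
  set T := ∫⁻ x in H, ∫⁻ y in H, ENNReal.ofReal |G x y * ω x * ω y| with hT
  set R := (3:ℝ) * n1 * n2 ^ ((1:ℝ)/2) * p ^ ((1:ℝ)/2) with hRdef
  have hRnn : 0 ≤ R := by
    apply mul_nonneg (mul_nonneg (by positivity) _) (Real.rpow_nonneg hp _)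
    exact Real.rpow_nonneg hn2 _
  suffices hTle : T ≤ ENNReal.ofReal R by
    have hTne : T ≠ ⊤ := (lt_of_le_of_lt hTle ENNReal.ofReal_lt_top).ne
    constructor
    · have h1 : |∫ x in H, ∫ y in H, G x y * ω x * ω y| ≤ T.toReal := by
        have h2 := norm_integral_le_lintegral_norm (μ := μ)
          (f := fun x => ∫ y in H, G x y * ω x * ω y)
        rw [Real.norm_eq_abs] at h2
        refine le_trans h2 ?_
        apply ENNReal.toReal_mono hTne
        apply lintegral_mono
        intro x
        calc ENNReal.ofReal ‖∫ y in H, G x y * ω x * ω y‖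
            ≤ ENNReal.ofReal ((∫⁻ y in H, ENNReal.ofReal ‖G x y * ω x * ω y‖).toReal) :=
              ENNReal.ofReal_le_ofReal (norm_integral_le_lintegral_norm _)
          _ ≤ ∫⁻ y in H, ENNReal.ofReal ‖G x y * ω x * ω y‖ := ENNReal.ofReal_toReal_le
          _ = ∫⁻ y in H, ENNReal.ofReal |G x y * ω x * ω y| := by
              simp only [Real.norm_eq_abs]
      refine le_trans h1 ?_
      calc T.toReal ≤ (ENNReal.ofReal R).toReal :=
            ENNReal.toReal_mono ENNReal.ofReal_ne_top hTle
        _ = R := ENNReal.toReal_ofReal hRnn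
    · exact lt_of_le_of_lt hTle ENNReal.ofReal_lt_top
  by_cases h0 : ω =ᵐ[μ] 0
  · have hzero : ∀ᵐ x ∂μ, (∫⁻ y in H, ENNReal.ofReal |G x y * ω x * ω y|) = 0 := by
      filter_upwards [h0] with x hx
      have : ∀ y : ℝ × ℝ, ENNReal.ofReal |G x y * ω x * ω y| = 0 := by
        intro y
        simp [hx]
      simp only [this, lintegral_zero]
    calc T = ∫⁻ _ in H, (0 : ENNReal) := lintegral_congr_ae hzero
      _ = 0 := lintegral_zero
      _ ≤ ENNReal.ofReal R := bot_le
  · -- non-degenerate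
    have hsqz : ¬ ((fun x => ω x ^ 2) =ᵐ[μ] 0) := by
      intro hc
      apply h0
      filter_upwards [hc] with x hx
      have : ω x ^ 2 = 0 := hx
      exact pow_eq_zero_iff (by norm_num) |>.mp this
    have hn2pos : 0 < n2 := by
      rcases hn2.lt_or_eq with h | h
      · exact h
      · exfalso
        apply hsqz
        have hint : ∫ x in H, ω x ^ 2 = 0 := by
          have hzz : norm2 ω = 0 := by rw [← hn2def, ← h]
          unfold norm2 at hzz
          have hb : 0 ≤ ∫ x in H, ω x ^ 2 :=
            setIntegral_nonneg measurableSet_H fun x _ => sq_nonneg _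
          by_contra hne
          have hbpos : 0 < ∫ x in H, ω x ^ 2 := lt_of_le_of_ne hb (Ne.symm hne)
          have := Real.rpow_pos_of_pos hbpos ((1:ℝ)/2)
          linarith
        exact (integral_eq_zero_iff_of_nonneg (fun x => sq_nonneg _) hω2).mp hint
    have hppos : 0 < p := by
      rcases hp.lt_or_eq with h | h
      · exact h
      · exfalso
        apply h0
        have hintnn : 0 ≤ᵐ[μ] fun x : ℝ × ℝ => x.2 * |ω x| := by
          filter_upwards [ae_restrict_mem measurableSet_H] with x hx
          exact mul_nonneg (le_of_lt hx) (abs_nonneg _)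
        have hz : (fun x : ℝ × ℝ => x.2 * |ω x|) =ᵐ[μ] 0 :=
          (integral_eq_zero_iff_of_nonneg_ae hintnn hI).mp h.symm
        filter_upwards [hz, ae_restrict_mem measurableSet_H] with x hx hxH
        have hx2 : (0:ℝ) < x.2 := hxH
        have : x.2 * |ω x| = 0 := hx
        have habs : |ω x| = 0 := by
          rcases mul_eq_zero.mp this with h' | h'
          · exact absurd h' hx2.ne'
          · exact h'
        simpa using abs_eq_zero.mp habs
    set δ := Real.sqrt (p / n2) with hδdef
    have hδ : 0 < δ := Real.sqrt_pos.mpr (div_pos hppos hn2pos)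
    refine le_trans (double_bound ω hω1 hω2 hI hδ) (ENNReal.ofReal_le_ofReal ?_)
    -- real arithmetic
    set sp := Real.sqrt p with hspdef
    set sn := Real.sqrt n2 with hsndef
    set s2 := Real.sqrt 2 with hs2def
    have hsp2 : sp^2 = p := Real.sq_sqrt hppos.le
    have hsn2 : sn^2 = n2 := Real.sq_sqrt hn2pos.le
    have hs22 : s2^2 = 2 := Real.sq_sqrt (by norm_num)
    have hsppos : 0 < sp := Real.sqrt_pos.mpr hppos
    have hsnpos : 0 < sn := Real.sqrt_pos.mpr hn2pos
    have hs2pos : 0 < s2 := Real.sqrt_pos.mpr (by norm_num)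
    have hδeq : δ = sp / sn := by rw [hδdef, Real.sqrt_div hppos.le]
    have hπ3 : (3:ℝ) < π := Real.pi_gt_three
    have hπ : (0:ℝ) < π := by linarith
    have hrp : n2 ^ ((1:ℝ)/2) = sn := by rw [hsndef, Real.sqrt_eq_rpow]
    have hrp2 : p ^ ((1:ℝ)/2) = sp := by rw [hspdef, Real.sqrt_eq_rpow]
    rw [hRdef, hrp, hrp2]
    have hq : 0 ≤ sp * sn * n1 := by positivity
    have hLHS : (1/(4*π)) * (s2 / δ * (n1 * p) + (s2 / δ * (p * n1) + 24 * δ * n2 * n1))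
        = (1/(4*π)) * ((2*s2 + 24) * (sp * sn * n1)) := by
      rw [hδeq, ← hsp2, ← hsn2]
      field_simp
      ring
    rw [hLHS]
    have hs2le : s2 ≤ 3/2 := by nlinarith
    rw [one_div, inv_mul_eq_div, div_le_iff₀ (by positivity)]
    nlinarith [mul_le_mul_of_nonneg_right hs2le hq, mul_le_mul_of_nonneg_right hπ3.le hq]

end
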